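/- Every algebraic complete OML is completely hereditarily atomic: if L is a complete OML in which every element is the supremum of the compact elements below it, then every complete subalgebra of L is atomic. -/

import Mathlib

/-- A complete orthomodular lattice. -/
class CompleteOML (α : Type*) extends CompleteLattice α, Compl α where
  compl_compl : ∀ x : α, xᶜᶜ = x
  compl_antitone : ∀ x y : α, x ≤ y → yᶜ ≤ xᶜ
  inf_compl : ∀ x : α, x ⊓ xᶜ = ⊥
  sup_compl : ∀ x : α, x ⊔ xᶜ = ⊤
  orthomodular : ∀ x y : α, x ≤ y → x ⊔ (xᶜ ⊓ y) = y

/-- A complete lattice is algebraic (compactly generated) if every element is the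
supremum of the compact elements below it. -/
def IsAlgebraicLattice (α : Type*) [CompleteLattice α] : Prop :=
  ∀ x : α, x = sSup {c : α | IsCompactElement c ∧ c ≤ x}

/-- A complete subalgebra of a complete OML. -/
def CompleteSubalgebra {α : Type*} [CompleteLattice α] [Compl α] (S : Set α) : Prop :=
  (∀ x ∈ S, xᶜ ∈ S) ∧ (∀ T : Set α, T ⊆ S → sSup T ∈ S) ∧ (∀ T : Set α, T ⊆ S → sInf T ∈ S)

/-- A subset `S` (as a poset with least element `⊥`) is atomic. -/
def AtomicSubset {α : Type*} [CompleteLattice α] (S : Set α) : Prop :=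
  ∀ x ∈ S, x ≠ ⊥ → ∃ a ∈ S, a ≠ ⊥ ∧ (∀ s ∈ S, ¬ (⊥ < s ∧ s < a)) ∧ a ≤ x

/-!
Given `x ≠ ⊥` in a complete subalgebra `S`, algebraicity provides a compact `c ≠ ⊥` below `x`,
and compactness lets Zorn's lemma produce an element `m ∈ S` maximal among those below `x` and
not above `c`. Then `mᶜ ⊓ x` is an atom of `S`: were `⊥ < s < mᶜ ⊓ x` with `s ∈ S`, then with
`t := sᶜ ⊓ (mᶜ ⊓ x)` maximality forces `c ≤ m ⊔ s` and `c ≤ m ⊔ t`, while orthomodularity gives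
`(m ⊔ s) ⊓ (m ⊔ t) = m` for the pairwise orthogonal `m, s, t`, so `c ≤ m`.
-/

theorem IsAlgebraicLattice.exists_isCompactElement_le {α : Type*} [CompleteLattice α]
    (h : IsAlgebraicLattice α) {x : α} (hx : x ≠ ⊥) :
    ∃ c, IsCompactElement c ∧ c ≠ ⊥ ∧ c ≤ x := by
  by_contra! hno
  refine hx ((h x).trans (sSup_eq_bot.mpr ?_))
  rintro c ⟨hc, hcx⟩
  by_contra hc0
  exact hno c hc hc0 hcx

theorem IsCompactElement.exists_maximal_not_le {α : Type*} [CompleteLattice α] {S : Set α}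
    (hS : ∀ T ⊆ S, sSup T ∈ S) {c : α} (hc : IsCompactElement c) (hc0 : c ≠ ⊥) :
    ∃ m, Maximal (· ∈ {s ∈ S | ¬ c ≤ s}) m := by
  refine zorn_le₀ _ fun T hT hchain =>
    ⟨sSup T, ⟨hS T fun s hs => (hT hs).1, fun hcT => ?_⟩, fun s => le_sSup⟩
  obtain rfl | hne := T.eq_empty_or_nonempty
  · exact hc0 (le_bot_iff.mp (sSup_empty (α := α) ▸ hcT))
  · obtain ⟨s, hs, hcs⟩ := (CompleteLattice.isCompactElement_iff_le_of_directed_sSup_le α c).mp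
      hc T hne hchain.directedOn hcT
    exact (hT hs).2 hcs

namespace CompleteSubalgebra

variable {α : Type*} [CompleteLattice α] [Compl α] {S : Set α}

theorem compl_mem (hS : CompleteSubalgebra S) {x : α} (hx : x ∈ S) : xᶜ ∈ S :=
  hS.1 x hx

theorem sup_mem (hS : CompleteSubalgebra S) {x y : α} (hx : x ∈ S) (hy : y ∈ S) : x ⊔ y ∈ S :=
  sSup_pair (a := x) (b := y) ▸ hS.2.1 {x, y} (Set.pair_subset hx hy)

theorem inf_mem (hS : CompleteSubalgebra S) {x y : α} (hx : x ∈ S) (hy : y ∈ S) : x ⊓ y ∈ S :=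
  sInf_pair (a := x) (b := y) ▸ hS.2.2 {x, y} (Set.pair_subset hx hy)

theorem sSup_mem_inter_Iic (hS : CompleteSubalgebra S) (x : α) :
    ∀ T ⊆ S ∩ Set.Iic x, sSup T ∈ S ∩ Set.Iic x := fun T hT =>
  ⟨hS.2.1 T (hT.trans Set.inter_subset_left), sSup_le fun _ hy => (hT hy).2⟩

end CompleteSubalgebra

namespace CompleteOML

variable {α : Type*} [CompleteOML α]

theorem compl_le_compl_iff {x y : α} : xᶜ ≤ yᶜ ↔ y ≤ x :=
  ⟨fun h => by simpa only [compl_compl] using compl_antitone _ _ h, compl_antitone _ _⟩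

theorem compl_sup (x y : α) : (x ⊔ y)ᶜ = xᶜ ⊓ yᶜ := by
  refine le_antisymm (le_inf (compl_antitone _ _ le_sup_left) (compl_antitone _ _ le_sup_right)) ?_
  rw [← compl_le_compl_iff, compl_compl]
  exact sup_le (compl_le_compl_iff.mp (by simpa only [compl_compl] using inf_le_left))
    (compl_le_compl_iff.mp (by simpa only [compl_compl] using inf_le_right))

theorem eq_of_le_of_compl_inf_eq_bot {x y : α} (hxy : x ≤ y) (h : xᶜ ⊓ y = ⊥) : y = x := by
  simpa only [h, sup_bot_eq] using (orthomodular x y hxy).symm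

theorem compl_inf_sup_of_le_compl {x y : α} (h : y ≤ xᶜ) : xᶜ ⊓ (x ⊔ y) = y := by
  refine eq_of_le_of_compl_inf_eq_bot (le_inf h le_sup_right) (le_bot_iff.mp ?_)
  calc yᶜ ⊓ (xᶜ ⊓ (x ⊔ y)) ≤ (x ⊔ y)ᶜ ⊓ (x ⊔ y) := by
        rw [compl_sup]
        exact le_inf (le_inf (inf_le_of_right_le inf_le_left) inf_le_left)
          (inf_le_of_right_le inf_le_right)
    _ = ⊥ := by rw [inf_comm, inf_compl]

theorem sup_inf_sup_eq_of_le_compl {m s t : α} (hs : s ≤ mᶜ) (ht : t ≤ mᶜ) (hst : t ≤ sᶜ) :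
    (m ⊔ s) ⊓ (m ⊔ t) = m := by
  refine eq_of_le_of_compl_inf_eq_bot (le_inf le_sup_left le_sup_left) (le_bot_iff.mp ?_)
  have hles : mᶜ ⊓ ((m ⊔ s) ⊓ (m ⊔ t)) ≤ s :=
    (inf_le_inf_left _ inf_le_left).trans (compl_inf_sup_of_le_compl hs).le
  have hlet : mᶜ ⊓ ((m ⊔ s) ⊓ (m ⊔ t)) ≤ t :=
    (inf_le_inf_left _ inf_le_right).trans (compl_inf_sup_of_le_compl ht).le
  exact (inf_compl s).le.trans' (le_inf hles (hlet.trans hst))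

end CompleteOML

namespace CompleteSubalgebra

open CompleteOML

variable {α : Type*} [CompleteOML α] {S : Set α} {x c m : α}

theorem le_sup_of_maximal (hS : CompleteSubalgebra S)
    (hm : Maximal (· ∈ {s ∈ S ∩ Set.Iic x | ¬ c ≤ s}) m) {u : α} (hu : u ∈ S) (hu0 : u ≠ ⊥)
    (hux : u ≤ mᶜ ⊓ x) : c ≤ m ⊔ u := by
  by_contra hcu
  have hum : u ≤ m :=
    le_sup_right.trans <| hm.2 ⟨⟨hS.sup_mem hm.1.1.1 hu,
      sup_le hm.1.1.2 (hux.trans inf_le_right)⟩, hcu⟩ le_sup_left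
  exact hu0 (le_bot_iff.mp ((inf_compl m).le.trans' (le_inf hum (hux.trans inf_le_left))))

theorem not_bot_lt_lt_compl_inf_of_maximal (hS : CompleteSubalgebra S) (hx : x ∈ S)
    (hm : Maximal (· ∈ {s ∈ S ∩ Set.Iic x | ¬ c ≤ s}) m) :
    ∀ s ∈ S, ¬ (⊥ < s ∧ s < mᶜ ⊓ x) := by
  rintro s hs ⟨hs0, hsa⟩
  set t := sᶜ ⊓ (mᶜ ⊓ x)
  have hst : s ⊔ t = mᶜ ⊓ x := orthomodular s _ hsa.le
  have ht0 : t ≠ ⊥ := fun ht => hsa.ne (by rwa [ht, sup_bot_eq] at hst)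
  have htS : t ∈ S := hS.inf_mem (hS.compl_mem hs) (hS.inf_mem (hS.compl_mem hm.1.1.1) hx)
  have hcs := hS.le_sup_of_maximal hm hs hs0.ne' hsa.le
  have hct := hS.le_sup_of_maximal hm htS ht0 inf_le_right
  refine hm.1.2 ?_
  rw [← sup_inf_sup_eq_of_le_compl (hsa.le.trans inf_le_left) (inf_le_right.trans inf_le_left)
    inf_le_left]
  exact le_inf hcs hct

end CompleteSubalgebra

/-- every algebraic complete OML is completely hereditarily atomic. -/
theorem algebraic_completeOML_completelyHereditarilyAtomic {α : Type*} [CompleteOML α]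
    (halg : IsAlgebraicLattice α) :
    ∀ S : Set α, CompleteSubalgebra S → AtomicSubset S := by
  intro S hS x hx hx0
  obtain ⟨c, hc, hc0, hcx⟩ := halg.exists_isCompactElement_le hx0
  obtain ⟨m, hm⟩ := hc.exists_maximal_not_le (hS.sSup_mem_inter_Iic x) hc0
  refine ⟨mᶜ ⊓ x, hS.inf_mem (hS.compl_mem hm.1.1.1) hx, fun h => ?_,
    hS.not_bot_lt_lt_compl_inf_of_maximal hx hm, inf_le_right⟩
  exact hm.1.2 (CompleteOML.eq_of_le_of_compl_inf_eq_bot hm.1.1.2 h ▸ hcx)
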